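/- arXiv:math/0302084 — 2 statements merged into one kernel-verified Lean document; each statement's English description precedes it below -/
import Mathlib

section
/- Let r ≥ 1 be an integer and let (α;β) = (α₁,…,α_{r+1};β₁,…,β_r) ∈ 𝒰_r be such that no β_i + 1 is a non-positive integer. Then for every complex number x with |x| < 1, Σ_{k=0}^∞ (α₁)_k⋯(α_{r+1})_k/((β₁+1)_k⋯(β_r+1)_k · k!) · x^k = (1 − x) · Σ_{k=0}^∞ (α₁+1)_k⋯(α_{r+1}+1)_k/((β₁+1)_k⋯(β_r+1)_k · k!) · x^k (generalized Euler transformation). -/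
noncomputable def poch (a : ℂ) (k : ℕ) : ℂ := Polynomial.eval a (ascPochhammer ℂ k)

noncomputable def esym {n : ℕ} (v : Fin n → ℂ) (l : ℕ) : ℂ :=
  ∑ t ∈ Finset.powersetCard l (Finset.univ : Finset (Fin n)), ∏ i ∈ t, v i

def inU (r : ℕ) (α : Fin (r+1) → ℂ) (β : Fin r → ℂ) : Prop :=
  ∀ l : ℕ, 1 ≤ l → l ≤ r → esym α l = esym β l

open Finset Filter Polynomial

lemma poch_zero (a : ℂ) : poch a 0 = 1 := by simp [poch]

lemma poch_succ_left (a : ℂ) (k : ℕ) : poch a (k+1) = a * poch (a+1) k := by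
  simp [poch, ascPochhammer_succ_left, Polynomial.eval_comp]

lemma poch_succ_right (a : ℂ) (k : ℕ) : poch a (k+1) = poch a k * (a + k) := by
  simp [poch, ascPochhammer_succ_right]

lemma poch_ne_zero {a : ℂ} (h : ∀ m : ℕ, a ≠ -(m : ℂ)) (k : ℕ) : poch a k ≠ 0 := by
  induction k with
  | zero => simp [poch_zero]
  | succ n ih =>
    rw [poch_succ_right]
    refine mul_ne_zero ih ?_
    intro hz
    exact h n (by linear_combination hz)

lemma esym_eq_esymm {n : ℕ} (v : Fin n → ℂ) (l : ℕ) :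
    esym v l = ((Finset.univ : Finset (Fin n)).val.map v).esymm l := by
  rw [Finset.esymm_map_val]; rfl

lemma esym_zero {n : ℕ} (v : Fin n → ℂ) : esym v 0 = 1 := by
  simp [esym]

lemma esym_top {n : ℕ} (v : Fin n → ℂ) : esym v n = ∏ i, v i := by
  have h := Finset.powersetCard_self (Finset.univ : Finset (Fin n))
  rw [Finset.card_univ, Fintype.card_fin] at h
  rw [esym, h]
  simp

lemma prod_add_esym {n : ℕ} (v : Fin n → ℂ) (z : ℂ) :
    ∏ i, (v i + z) = ∑ l ∈ Finset.range (n+1), esym v l * z ^ (n - l) := by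
  have h := congrArg (Polynomial.eval z)
    (Multiset.prod_X_add_C_eq_sum_esymm ((Finset.univ : Finset (Fin n)).val.map v))
  simp only [Multiset.card_map, Finset.card_val, Finset.card_univ, Fintype.card_fin,
    Polynomial.eval_multiset_prod, Polynomial.eval_finset_sum, Polynomial.eval_mul,
    Polynomial.eval_pow, Polynomial.eval_C, Polynomial.eval_X, Multiset.map_map] at h
  rw [show (∏ i, (v i + z)) = (Multiset.map (Polynomial.eval z ∘ (fun r => Polynomial.X + Polynomial.C r) ∘ v)
        (Finset.univ : Finset (Fin n)).val).prod by
    rw [Finset.prod_eq_multiset_prod]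
    exact congrArg Multiset.prod (Multiset.map_congr rfl fun i _ => by simp [add_comm])]
  rw [h]
  exact Finset.sum_congr rfl fun l _ => by rw [esym_eq_esymm]

lemma key_identity (r : ℕ) (α : Fin (r+1) → ℂ) (β : Fin r → ℂ) (hU : inU r α β) (z : ℂ) :
    ∏ i, (α i + z) - z * ∏ i, (β i + z) = ∏ i, α i := by
  rw [prod_add_esym α z, prod_add_esym β z, Finset.sum_range_succ, Finset.mul_sum]
  have hz : ∀ l ∈ Finset.range (r+1),
      esym α l * z ^ (r + 1 - l) = z * (esym β l * z ^ (r - l)) := by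
    intro l hl
    rw [Finset.mem_range] at hl
    have hlr : l ≤ r := Nat.lt_succ_iff.mp hl
    have he : esym α l = esym β l := by
      rcases Nat.eq_zero_or_pos l with h0 | h1
      · subst h0; rw [esym_zero, esym_zero]
      · exact hU l h1 hlr
    have hp : r + 1 - l = (r - l) + 1 := by omega
    rw [he, hp, pow_succ]
    ring
  rw [Finset.sum_congr rfl hz, esym_top]
  simp

lemma step_identity (r : ℕ) (α : Fin (r+1) → ℂ) (β : Fin r → ℂ)
    (hU : inU r α β) (hβ : ∀ i : Fin r, ∀ m : ℕ, β i + 1 ≠ -(m : ℂ)) (x : ℂ) (k : ℕ) :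
    (∏ i, poch (α i) (k+1)) / ((∏ i, poch (β i + 1) (k+1)) * ((k+1).factorial : ℂ)) * x ^ (k+1)
      = (∏ i, poch (α i + 1) (k+1)) / ((∏ i, poch (β i + 1) (k+1)) * ((k+1).factorial : ℂ)) * x ^ (k+1)
        - x * ((∏ i, poch (α i + 1) k) / ((∏ i, poch (β i + 1) k) * (k.factorial : ℂ)) * x ^ k) := by
  have hQ : (∏ i, poch (β i + 1) k) ≠ 0 :=
    Finset.prod_ne_zero_iff.mpr fun i _ => poch_ne_zero (hβ i) k
  have hw : ∀ i : Fin r, (β i + 1 + (k : ℂ)) ≠ 0 := fun i hz => hβ i k (by linear_combination hz)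
  have hwp : (∏ i, (β i + 1 + (k : ℂ))) ≠ 0 := Finset.prod_ne_zero_iff.mpr fun i _ => hw i
  have hF : ((k.factorial : ℕ) : ℂ) ≠ 0 := Nat.cast_ne_zero.mpr k.factorial_ne_zero
  have hk1 : ((k : ℂ) + 1) ≠ 0 := by
    have h := Nat.cast_ne_zero (R := ℂ).mpr (Nat.succ_ne_zero k)
    push_cast at h
    exact h
  have key := key_identity r α β hU ((k : ℂ) + 1)
  have hu' : (∏ i, (α i + ((k : ℂ) + 1))) = ∏ i, (α i + 1 + (k : ℂ)) :=
    Finset.prod_congr rfl fun i _ => by ring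
  have hw' : (∏ i, (β i + ((k : ℂ) + 1))) = ∏ i, (β i + 1 + (k : ℂ)) :=
    Finset.prod_congr rfl fun i _ => by ring
  rw [hu', hw'] at key
  rw [show (∏ i, poch (α i) (k+1)) = (∏ i, α i) * ∏ i, poch (α i + 1) k by
        rw [← Finset.prod_mul_distrib]; exact Finset.prod_congr rfl fun i _ => poch_succ_left _ _]
  rw [show (∏ i, poch (α i + 1) (k+1)) = (∏ i, poch (α i + 1) k) * ∏ i, (α i + 1 + (k : ℂ)) by
        rw [← Finset.prod_mul_distrib]; exact Finset.prod_congr rfl fun i _ => poch_succ_right _ _]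
  rw [show (∏ i, poch (β i + 1) (k+1)) = (∏ i, poch (β i + 1) k) * ∏ i, (β i + 1 + (k : ℂ)) by
        rw [← Finset.prod_mul_distrib]; exact Finset.prod_congr rfl fun i _ => poch_succ_right _ _]
  rw [show (((k+1).factorial : ℕ) : ℂ) = ((k : ℂ) + 1) * (k.factorial : ℂ) by
        rw [Nat.factorial_succ]; push_cast; ring]
  rw [show (∏ i, α i) = (∏ i, (α i + 1 + (k : ℂ))) - ((k : ℂ) + 1) * ∏ i, (β i + 1 + (k : ℂ)) from
        key.symm]
  field_simp
  ring

lemma aux_tendsto (a b : ℂ) :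
    Filter.Tendsto (fun k : ℕ => (a + (k : ℂ)) / (b + (k : ℂ))) Filter.atTop (nhds 1) := by
  have h0 : Filter.Tendsto (fun k : ℕ => ((k : ℂ))⁻¹) Filter.atTop (nhds 0) := by
    have h1 : Filter.Tendsto (fun k : ℕ => ((k : ℝ))⁻¹) Filter.atTop (nhds 0) :=
      tendsto_inv_atTop_nhds_zero_nat
    have h2 := (Complex.continuous_ofReal.tendsto 0).comp h1
    apply h2.congr
    intro k
    simp
  have hnum : Filter.Tendsto (fun k : ℕ => a * ((k : ℂ))⁻¹ + 1) Filter.atTop (nhds 1) := by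
    have := (h0.const_mul a).add (tendsto_const_nhds (x := (1 : ℂ)))
    simpa using this
  have hden : Filter.Tendsto (fun k : ℕ => b * ((k : ℂ))⁻¹ + 1) Filter.atTop (nhds 1) := by
    have := (h0.const_mul b).add (tendsto_const_nhds (x := (1 : ℂ)))
    simpa using this
  have hmain := hnum.div hden one_ne_zero
  rw [div_one] at hmain
  apply hmain.congr'
  filter_upwards [Filter.eventually_gt_atTop 0] with k hk
  have hk' : ((k : ℂ)) ≠ 0 := Nat.cast_ne_zero.mpr hk.ne'
  have h1 : a * ((k : ℂ))⁻¹ + 1 = (a + (k : ℂ)) * ((k : ℂ))⁻¹ := by field_simp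
  have h2 : b * ((k : ℂ))⁻¹ + 1 = (b + (k : ℂ)) * ((k : ℂ))⁻¹ := by field_simp
  show (a * ((k : ℂ))⁻¹ + 1) / (b * ((k : ℂ))⁻¹ + 1) = _
  rw [h1, h2, mul_div_mul_right _ _ (inv_ne_zero hk')]

lemma ratio_eq (r : ℕ) (α : Fin (r+1) → ℂ) (β : Fin r → ℂ) (x : ℂ) (k : ℕ) :
    (∏ i, poch (α i + 1) (k+1)) / ((∏ i, poch (β i + 1) (k+1)) * ((k+1).factorial : ℂ)) * x ^ (k+1)
    = (x * ((∏ i, (α i + 1 + (k : ℂ))) / (((k : ℂ) + 1) * ∏ i, (β i + 1 + (k : ℂ))))) *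
      ((∏ i, poch (α i + 1) k) / ((∏ i, poch (β i + 1) k) * (k.factorial : ℂ)) * x ^ k) := by
  rw [show (∏ i, poch (α i + 1) (k+1)) = (∏ i, poch (α i + 1) k) * ∏ i, (α i + 1 + (k : ℂ)) by
        rw [← Finset.prod_mul_distrib]; exact Finset.prod_congr rfl fun i _ => poch_succ_right _ _]
  rw [show (∏ i, poch (β i + 1) (k+1)) = (∏ i, poch (β i + 1) k) * ∏ i, (β i + 1 + (k : ℂ)) by
        rw [← Finset.prod_mul_distrib]; exact Finset.prod_congr rfl fun i _ => poch_succ_right _ _]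
  rw [show (((k+1).factorial : ℕ) : ℂ) = ((k : ℂ) + 1) * (k.factorial : ℂ) by
        rw [Nat.factorial_succ]; push_cast; ring]
  rw [pow_succ]
  generalize ((k : ℂ) + 1) = c
  ring

lemma ratio_tendsto (r : ℕ) (α : Fin (r+1) → ℂ) (β : Fin r → ℂ) :
    Filter.Tendsto
      (fun k : ℕ => (∏ i, (α i + 1 + (k : ℂ))) / (((k : ℂ) + 1) * ∏ i, (β i + 1 + (k : ℂ))))
      Filter.atTop (nhds 1) := by
  have hform : ∀ k : ℕ,
      (∏ i, (α i + 1 + (k : ℂ))) / (((k : ℂ) + 1) * ∏ i, (β i + 1 + (k : ℂ)))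
        = (∏ i : Fin r, ((α i.castSucc + 1 + (k : ℂ)) / (β i + 1 + (k : ℂ))))
          * ((α (Fin.last r) + 1 + (k : ℂ)) / ((k : ℂ) + 1)) := by
    intro k
    rw [Finset.prod_div_distrib, div_mul_div_comm,
      Fin.prod_univ_castSucc (f := fun i : Fin (r+1) => α i + 1 + (k : ℂ))]
    ring
  have hprod : Filter.Tendsto
      (fun k : ℕ => ∏ i : Fin r, ((α i.castSucc + 1 + (k : ℂ)) / (β i + 1 + (k : ℂ))))
      Filter.atTop (nhds 1) := by
    have h := tendsto_finset_prod (Finset.univ : Finset (Fin r))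
      (f := fun i (k : ℕ) => (α i.castSucc + 1 + (k : ℂ)) / (β i + 1 + (k : ℂ)))
      (a := fun _ => 1) (fun i _ => aux_tendsto (α i.castSucc + 1) (β i + 1))
    simpa using h
  have hlast : Filter.Tendsto
      (fun k : ℕ => (α (Fin.last r) + 1 + (k : ℂ)) / ((k : ℂ) + 1)) Filter.atTop (nhds 1) :=
    (aux_tendsto (α (Fin.last r) + 1) 1).congr (fun k => by rw [add_comm (1 : ℂ) (k : ℂ)])
  have h := hprod.mul hlast
  rw [mul_one] at h
  exact h.congr fun k => (hform k).symm

/-- Generalized Euler transformation (Theorem 2.2 / thm:main). -/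
theorem generalized_euler_transformation
    (r : ℕ) (hr : 1 ≤ r) (α : Fin (r+1) → ℂ) (β : Fin r → ℂ)
    (hU : inU r α β)
    (hβ : ∀ i : Fin r, ∀ m : ℕ, β i + 1 ≠ -(m : ℂ))
    (x : ℂ) (hx : ‖x‖ < 1) :
    ∑' k : ℕ, (∏ i, poch (α i) k) / ((∏ i, poch (β i + 1) k) * (k.factorial : ℂ)) * x ^ k
      = (1 - x) *
        ∑' k : ℕ, (∏ i, poch (α i + 1) k) / ((∏ i, poch (β i + 1) k) * (k.factorial : ℂ)) * x ^ k := by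
  set A : ℕ → ℂ :=
    fun k => (∏ i, poch (α i) k) / ((∏ i, poch (β i + 1) k) * (k.factorial : ℂ)) * x ^ k with hAdef
  set B : ℕ → ℂ :=
    fun k => (∏ i, poch (α i + 1) k) / ((∏ i, poch (β i + 1) k) * (k.factorial : ℂ)) * x ^ k
    with hBdef
  set q : ℕ → ℂ :=
    fun k => x * ((∏ i, (α i + 1 + (k : ℂ))) / (((k : ℂ) + 1) * ∏ i, (β i + 1 + (k : ℂ))))
    with hqdef
  have hstep : ∀ k : ℕ, A (k+1) = B (k+1) - x * B k := fun k => step_identity r α β hU hβ x k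
  have hq : ∀ k : ℕ, B (k+1) = q k * B k := fun k => ratio_eq r α β x k
  set c : ℝ := (1 + ‖x‖)/2 with hc
  have hc1 : c < 1 := by rw [hc]; linarith
  have hxc : ‖x‖ < c := by rw [hc]; linarith
  have htend : Filter.Tendsto (fun k : ℕ => ‖q k‖) Filter.atTop (nhds ‖x‖) := by
    have h := (tendsto_const_nhds (x := x)).mul (ratio_tendsto r α β)
    rw [mul_one] at h
    exact h.norm
  have hev : ∀ᶠ k in Filter.atTop, ‖q k‖ < c := htend.eventually_lt_const hxc
  have hsum : Summable B := by
    apply summable_of_ratio_norm_eventually_le hc1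
    filter_upwards [hev] with k hk
    rw [hq k, norm_mul]
    exact mul_le_mul_of_nonneg_right hk.le (norm_nonneg (B k))
  have hBsucc : Summable (fun k => B (k+1)) := (summable_nat_add_iff 1).mpr hsum
  have hAsucc : Summable (fun k => A (k+1)) :=
    (hBsucc.sub (hsum.mul_left x)).congr fun k => (hstep k).symm
  have hAsum : Summable A := (summable_nat_add_iff 1).mp hAsucc
  have hA0 : A 0 = 1 := by simp [hAdef, poch_zero]
  have hB0 : B 0 = 1 := by simp [hBdef, poch_zero]
  have hsplitB : ∑' k, B k = B 0 + ∑' k, B (k+1) := Summable.tsum_eq_zero_add hsum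
  have hsplitA : ∑' k, A k = A 0 + ∑' k, A (k+1) := Summable.tsum_eq_zero_add hAsum
  have htailA : ∑' k, A (k+1) = (∑' k, B (k+1)) - x * ∑' k, B k := by
    calc ∑' k, A (k+1) = ∑' k, (B (k+1) - x * B k) := tsum_congr hstep
    _ = (∑' k, B (k+1)) - ∑' k, x * B k := Summable.tsum_sub hBsucc (hsum.mul_left x)
    _ = (∑' k, B (k+1)) - x * ∑' k, B k := by rw [tsum_mul_left]
  rw [hsplitA, htailA, hA0]
  rw [hB0] at hsplitB
  linear_combination -hsplitB
end

section
/- Let a, b, c, d, e ∈ ℂ be such that neither d nor e is a non-positive integer, ab + bc + ca = (d−1)(e−1), and d + e − a − b − c = 2. Then ₃F₂(a, b, c; d, e; 1) = Γ(d)·Γ(e) / (Γ(a+1)·Γ(b+1)·Γ(c+1)), where a quotient of Gamma values with a denominator argument equal to a non-positive integer is interpreted as zero. -/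
/-!
Under the two parameter conditions, `(a + x) (b + x) (c + x) = x (x + d - 1) (x + e - 1) + a b c`
identically in `x`. As `tₖ₊₁ / tₖ = (a + k) (b + k) (c + k) / ((d + k) (e + k) (k + 1))`, the
summand `tₖ` of the series telescopes: `a b c tₖ = vₖ₊₁ - vₖ` with `vₖ = k (k + d - 1) (k + e - 1) tₖ`.
Euler's limit `Γ(s) = lim n^s n! / (s (s + 1) ⋯ (s + n))` gives
`vₙ → Γ(d) Γ(e) / (Γ(a) Γ(b) Γ(c))` and `tₙ = O(n⁻²)`, so `a b c · ₃F₂ = Γ(d) Γ(e) / (Γ(a) Γ(b) Γ(c))`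
and `Γ(x + 1) = x Γ(x)` finishes when `a b c ≠ 0`. When `a b c = 0` the series is `1`, and the
conditions force `{a + 1, b + 1, c + 1} = {1, d, e}`.
-/

open Filter Finset Topology Complex

noncomputable def F32 (a b c d e : ℂ) : ℂ :=
  ∑' k : ℕ, (poch a k * poch b k * poch c k) / (poch d k * poch e k * (k.factorial : ℂ))

lemma poch_succ (a : ℂ) (k : ℕ) : poch a (k + 1) = poch a k * (a + k) :=
  ascPochhammer_succ_eval k a

lemma poch_eq_prod_range (a : ℂ) (n : ℕ) : poch a n = ∏ j ∈ range n, (a + j) := by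
  induction n with
  | zero => simp [poch]
  | succ n ih => rw [poch_succ, ih, prod_range_succ]

lemma poch_zero_left {k : ℕ} (hk : k ≠ 0) : poch 0 k = 0 := by
  simp [poch, hk]

lemma inv_GammaSeq (s : ℂ) (n : ℕ) :
    (GammaSeq s n)⁻¹ = poch s (n + 1) / ((n : ℂ) ^ s * n.factorial) := by
  rw [GammaSeq, inv_div, poch_eq_prod_range]

lemma poch_succ_eq_GammaSeq (s : ℂ) {n : ℕ} (hn : n ≠ 0) :
    poch s (n + 1) = (n : ℂ) ^ s * n.factorial * (GammaSeq s n)⁻¹ := by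
  rw [inv_GammaSeq, mul_div_cancel₀]
  exact mul_ne_zero (by simp [cpow_eq_zero_iff, hn]) (mod_cast n.factorial_ne_zero)

/-- At a pole `s = -m`, `GammaSeq s n = 0` for `n ≥ m`, matching the junk value `(Γ s)⁻¹ = 0`. -/
lemma tendsto_inv_GammaSeq (s : ℂ) :
    Tendsto (fun n ↦ (GammaSeq s n)⁻¹) atTop (𝓝 (Gamma s)⁻¹) := by
  by_cases hs : ∃ m : ℕ, s = -m
  · obtain ⟨m, rfl⟩ := hs
    rw [Gamma_neg_nat_eq_zero, inv_zero]
    refine tendsto_const_nhds.congr' ?_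
    filter_upwards [eventually_ge_atTop m] with n hn
    rw [inv_GammaSeq, poch, ascPochhammer_eval_neg_coe_nat_of_lt (by omega), zero_div]
  · exact (GammaSeq_tendsto_Gamma s).inv₀ (Gamma_ne_zero (not_exists.mp hs))

noncomputable def F32Term (a b c d e : ℂ) (k : ℕ) : ℂ :=
  poch a k * poch b k * poch c k / (poch d k * poch e k * (k.factorial : ℂ))

lemma F32_eq_tsum_F32Term (a b c d e : ℂ) : F32 a b c d e = ∑' k, F32Term a b c d e k := rfl

lemma F32Term_succ (a b c d e : ℂ) (k : ℕ) :
    F32Term a b c d e (k + 1) =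
      F32Term a b c d e k * ((a + k) * (b + k) * (c + k) / ((d + k) * (e + k) * (k + 1))) := by
  simp only [F32Term, poch_succ, Nat.factorial_succ]
  push_cast
  rw [div_mul_div_comm]
  ring

noncomputable def gammaSeqRatio (a b c d e : ℂ) (n : ℕ) : ℂ :=
  GammaSeq d n * GammaSeq e n * (GammaSeq a n)⁻¹ * (GammaSeq b n)⁻¹ * (GammaSeq c n)⁻¹

lemma tendsto_gammaSeqRatio (a b c d e : ℂ) :
    Tendsto (gammaSeqRatio a b c d e) atTop
      (𝓝 (Gamma d * Gamma e * (Gamma a)⁻¹ * (Gamma b)⁻¹ * (Gamma c)⁻¹)) :=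
  ((((GammaSeq_tendsto_Gamma d).mul (GammaSeq_tendsto_Gamma e)).mul
    (tendsto_inv_GammaSeq a)).mul (tendsto_inv_GammaSeq b)).mul (tendsto_inv_GammaSeq c)

section Balanced

variable {a b c d e : ℂ}

lemma add_mul_add_mul_add_eq (hquad : a * b + b * c + c * a = (d - 1) * (e - 1))
    (hbal : d + e - a - b - c = 2) (x : ℂ) :
    (a + x) * (b + x) * (c + x) = x * (x + d - 1) * (x + e - 1) + a * b * c := by
  linear_combination x * hquad - x ^ 2 * hbal

lemma mul_sum_range_F32Term (hd : ∀ m : ℕ, d ≠ -(m : ℂ)) (he : ∀ m : ℕ, e ≠ -(m : ℂ))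
    (hquad : a * b + b * c + c * a = (d - 1) * (e - 1)) (hbal : d + e - a - b - c = 2) (N : ℕ) :
    a * b * c * ∑ k ∈ range N, F32Term a b c d e k =
      N * (N + d - 1) * (N + e - 1) * F32Term a b c d e N := by
  induction N with
  | zero => simp
  | succ N ih =>
    have hdN : d + N ≠ 0 := fun h ↦ hd N (eq_neg_of_add_eq_zero_left h)
    have heN : e + N ≠ 0 := fun h ↦ he N (eq_neg_of_add_eq_zero_left h)
    have hN : (N : ℂ) + 1 ≠ 0 := Nat.cast_add_one_ne_zero N
    rw [sum_range_succ, mul_add, ih, F32Term_succ]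
    push_cast
    field_simp
    linear_combination -(F32Term a b c d e N * (d + N) * (e + N)) *
      add_mul_add_mul_add_eq hquad hbal N

lemma F32Term_succ_eq_gammaSeqRatio (hbal : d + e - a - b - c = 2) {n : ℕ} (hn : n ≠ 0) :
    F32Term a b c d e (n + 1) = gammaSeqRatio a b c d e n / ((n : ℂ) ^ 2 * (n + 1)) := by
  have hn' : (n : ℂ) ≠ 0 := Nat.cast_ne_zero.mpr hn
  have hpow : (n : ℂ) ^ a * (n : ℂ) ^ b * (n : ℂ) ^ c * (n : ℂ) ^ 2 = (n : ℂ) ^ d * (n : ℂ) ^ e := by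
    rw [← cpow_natCast, ← cpow_add _ _ hn', ← cpow_add _ _ hn', ← cpow_add _ _ hn',
      ← cpow_add _ _ hn']
    congr 1
    linear_combination -hbal
  have hnd : (n : ℂ) ^ d ≠ 0 := by simp [cpow_eq_zero_iff, hn]
  have hne : (n : ℂ) ^ e ≠ 0 := by simp [cpow_eq_zero_iff, hn]
  have hfact : (n.factorial : ℂ) ≠ 0 := Nat.cast_ne_zero.mpr n.factorial_ne_zero
  simp only [F32Term, gammaSeqRatio, poch_succ_eq_GammaSeq _ hn, Nat.factorial_succ]
  push_cast
  field_simp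
  linear_combination
    GammaSeq d n * GammaSeq e n / (GammaSeq a n * GammaSeq b n * GammaSeq c n) * hpow

lemma summable_F32Term (hbal : d + e - a - b - c = 2) : Summable (F32Term a b c d e) := by
  rw [← summable_nat_add_iff 1]
  obtain ⟨C, hC⟩ := (tendsto_gammaSeqRatio a b c d e).norm.isBoundedUnder_le
  refine .of_norm_bounded_eventually_nat ((Real.summable_nat_pow_inv.mpr one_lt_two).mul_left C) ?_
  filter_upwards [hC, eventually_ne_atTop 0] with n hRn hn
  rw [F32Term_succ_eq_gammaSeqRatio hbal hn, norm_div, norm_mul, norm_pow, norm_natCast,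
    ← Nat.cast_add_one, norm_natCast, ← div_eq_mul_inv]
  calc ‖gammaSeqRatio a b c d e n‖ / ((n : ℝ) ^ 2 * ((n + 1 : ℕ) : ℝ))
      ≤ C / ((n : ℝ) ^ 2 * 1) := by
        gcongr
        · exact (norm_nonneg _).trans hRn
        · exact hRn
        · exact_mod_cast Nat.le_add_left 1 n
    _ = C / (n : ℝ) ^ 2 := by rw [mul_one]

lemma tendsto_F32Term_mul (hbal : d + e - a - b - c = 2) :
    Tendsto (fun N : ℕ ↦ N * (N + d - 1) * (N + e - 1) * F32Term a b c d e N) atTop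
      (𝓝 (Gamma d * Gamma e * (Gamma a)⁻¹ * (Gamma b)⁻¹ * (Gamma c)⁻¹)) := by
  rw [← tendsto_add_atTop_iff_nat 1]
  have hfactor : Tendsto (fun n : ℕ ↦ (1 + d / n) * (1 + e / n)) atTop (𝓝 1) := by
    simpa using ((tendsto_const_div_atTop_nhds_zero_nat d).const_add 1).mul
      ((tendsto_const_div_atTop_nhds_zero_nat e).const_add 1)
  have hlim := hfactor.mul (tendsto_gammaSeqRatio a b c d e)
  rw [one_mul] at hlim
  refine hlim.congr' ?_
  filter_upwards [eventually_ne_atTop 0] with n hn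
  rw [F32Term_succ_eq_gammaSeqRatio hbal hn]
  push_cast
  field_simp
  ring

lemma mul_F32_eq (hd : ∀ m : ℕ, d ≠ -(m : ℂ)) (he : ∀ m : ℕ, e ≠ -(m : ℂ))
    (hquad : a * b + b * c + c * a = (d - 1) * (e - 1)) (hbal : d + e - a - b - c = 2) :
    a * b * c * F32 a b c d e =
      Gamma d * Gamma e * (Gamma a)⁻¹ * (Gamma b)⁻¹ * (Gamma c)⁻¹ := by
  have hpartial := ((summable_F32Term hbal).hasSum.tendsto_sum_nat).const_mul (a * b * c)
  simp only [mul_sum_range_F32Term hd he hquad hbal] at hpartial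
  exact tendsto_nhds_unique hpartial (tendsto_F32Term_mul hbal)

lemma F32_eq_one_of_mul_eq_zero (h : a * b * c = 0) : F32 a b c d e = 1 := by
  rw [F32_eq_tsum_F32Term, tsum_eq_single 0 fun k hk ↦ ?_]
  · simp [F32Term, poch]
  have hpoch : poch a k * poch b k * poch c k = 0 := by
    simp only [mul_eq_zero] at h
    obtain (rfl | rfl) | rfl := h <;> simp [poch_zero_left hk]
  rw [F32Term, hpoch, zero_div]

lemma Gamma_add_one_mul_Gamma_add_one_eq (hquad : b * c = (d - 1) * (e - 1))
    (hbal : d + e - b - c = 2) : Gamma (b + 1) * Gamma (c + 1) = Gamma d * Gamma e := by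
  have hroots : (d - (b + 1)) * (d - (c + 1)) = 0 := by
    linear_combination hquad + (d - 1) * hbal
  rcases mul_eq_zero.mp hroots with h | h
  · rw [show d = b + 1 by linear_combination h, show e = c + 1 by linear_combination hbal - h]
  · rw [show d = c + 1 by linear_combination h, show e = b + 1 by linear_combination hbal - h,
      mul_comm]

lemma Gamma_add_one_mul_eq_of_mul_eq_zero (hquad : a * b + b * c + c * a = (d - 1) * (e - 1))
    (hbal : d + e - a - b - c = 2) (h : a * b * c = 0) :
    Gamma (a + 1) * Gamma (b + 1) * Gamma (c + 1) = Gamma d * Gamma e := by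
  simp only [mul_eq_zero] at h
  obtain (rfl | rfl) | rfl := h <;> simp only [zero_add, Gamma_one, one_mul, mul_one] <;>
    exact Gamma_add_one_mul_Gamma_add_one_eq (by linear_combination hquad)
      (by linear_combination hbal)

end Balanced

/-- Theorem thm:newguys, part 1. -/
theorem slater_orbit_formula_one
    (a b c d e : ℂ)
    (hd : ∀ m : ℕ, d ≠ -(m : ℂ))
    (he : ∀ m : ℕ, e ≠ -(m : ℂ))
    (hquad : a * b + b * c + c * a = (d - 1) * (e - 1))
    (hbal : d + e - a - b - c = 2) :
    F32 a b c d e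
      = Complex.Gamma d * Complex.Gamma e /
          (Complex.Gamma (a + 1) * Complex.Gamma (b + 1) * Complex.Gamma (c + 1)) := by
  rcases eq_or_ne (a * b * c) 0 with habc | habc
  · rw [F32_eq_one_of_mul_eq_zero habc, Gamma_add_one_mul_eq_of_mul_eq_zero hquad hbal habc,
      div_self (mul_ne_zero (Gamma_ne_zero hd) (Gamma_ne_zero he))]
  obtain ⟨⟨ha, hb⟩, hc⟩ := (mul_ne_zero_iff.mp habc).imp_left mul_ne_zero_iff.mp
  calc F32 a b c d e = (a * b * c)⁻¹ * (a * b * c * F32 a b c d e) :=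
        (inv_mul_cancel_left₀ habc _).symm
    _ = _ := by
        rw [mul_F32_eq hd he hquad hbal, Gamma_add_one a ha, Gamma_add_one b hb,
          Gamma_add_one c hc]
        ring
end
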